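/- Let α > 0 and let (u₁,…,u_n) ∈ (0,∞)ⁿ be a positive solution of the discrete system (Sα). Suppose there exists d ∈ [0,1) such that d·g₁(x)/G₁(x) − 2g₂′(x)/g₂(x) ≥ 0 for all x > 0, and that G″(x) ≥ 0 for all x > 0, where g := g₁/g₂ and G := G₁/g₂². Then g²(u₁) < α²/(1−d). Moreover, if g and G are strictly increasing bijections of (0,∞) onto (0,∞), then u₁ < g⁻¹(α/√(1−d)) and u_n < G⁻¹(G(g⁻¹(α/√(1−d))) + α²/2). -/

import Mathlib

noncomputable section

/-- `Useq g1 h k` is the function `U_{k+1}` (0-indexed version of the recursion). -/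
def Useq (g1 : ℝ → ℝ) (h : ℝ) : ℕ → ℝ → ℝ
  | 0 => fun x => x
  | 1 => fun x => x + h ^ 2 / 2 * g1 x
  | k + 2 => fun x =>
      2 * Useq g1 h (k + 1) x - Useq g1 h k x + h ^ 2 * g1 (Useq g1 h (k + 1) x)

/-- `discU g1 h k` is the function `U_k` from the paper, for `1 ≤ k`. -/
def discU (g1 : ℝ → ℝ) (h : ℝ) (k : ℕ) : ℝ → ℝ := Useq g1 h (k - 1)

/-- The function `A(u₁)` from the paper. -/
def discA (g1 g2 : ℝ → ℝ) (h : ℝ) (n : ℕ) (x : ℝ) : ℝ :=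
  ((discU g1 h n x - discU g1 h (n - 1) x) / h + h / 2 * g1 (discU g1 h n x)) /
    g2 (discU g1 h n x)

/-- `(u₁, …, u_n)` (encoded as `u : ℕ → ℝ` on indices `1,…,n`) is a positive solution of
the discrete system `(Sα)`. -/
def IsSolution (g1 g2 : ℝ → ℝ) (n : ℕ) (h α : ℝ) (u : ℕ → ℝ) : Prop :=
  (∀ k, 1 ≤ k → k ≤ n → 0 < u k) ∧
  u 2 - u 1 = h ^ 2 / 2 * g1 (u 1) ∧
  (∀ k, 2 ≤ k → k ≤ n - 1 → u (k + 1) - 2 * u k + u (k - 1) = h ^ 2 * g1 (u k)) ∧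
  u n - u (n - 1) = -(h ^ 2 / 2) * g1 (u n) + h * α * g2 (u n)

/-- `G₁`, the primitive of `g₁` vanishing at `0`. -/
def primG1 (g1 : ℝ → ℝ) (x : ℝ) : ℝ := ∫ t in (0:ℝ)..x, g1 t

/-- `g := g₁/g₂`. -/
def gg (g1 g2 : ℝ → ℝ) (x : ℝ) : ℝ := g1 x / g2 x

/-- `G := G₁/g₂²`. -/
def GG (g1 g2 : ℝ → ℝ) (x : ℝ) : ℝ := primG1 g1 x / (g2 x) ^ 2

/-- The trapezoidal-rule error `E` as a function of `u₁`. -/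
def trapError (g1 : ℝ → ℝ) (h : ℝ) (n : ℕ) (x : ℝ) : ℝ :=
  (∑ k ∈ Finset.Icc 1 (n - 1),
    (g1 (discU g1 h k x) + g1 (discU g1 h (k + 1) x)) / 2 *
      (discU g1 h (k + 1) x - discU g1 h k x)) -
  (primG1 g1 (discU g1 h n x) - primG1 g1 (discU g1 h 1 x))

/-- The Jacobian matrix `J(α,u)` of the system `(Sα)`. -/
def Jmat (g1 g2 : ℝ → ℝ) (n : ℕ) (h α : ℝ) (u : ℕ → ℝ) : Matrix (Fin n) (Fin n) ℝ :=
  Matrix.of fun i j =>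
    if i = j then
      (if (i : ℕ) = 0 then 1 + h ^ 2 / 2 * deriv g1 (u 1)
       else if (i : ℕ) = n - 1 then
         1 + h ^ 2 / 2 * deriv g1 (u n) - h * α * deriv g2 (u n)
       else 2 + h ^ 2 * deriv g1 (u ((i : ℕ) + 1)))
    else if (i : ℕ) + 1 = (j : ℕ) ∨ (j : ℕ) + 1 = (i : ℕ) then -1 else 0

/-!
Write `δₖ = u_{k+1} - u_k`. On a positive solution the scheme gives `δ₁ = h²g₁(u₁)/2` and
`δₖ - δ_{k-1} = h²g₁(u_k) ≥ h²g₁(u₁)`, so `u` increases and, since `h(n-1) = 1`,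
`u_n - u₁ ≥ g₁(u₁)/2`. Convexity of `g₁` makes the trapezoid rule overestimate `G₁`; telescoped
along the scheme and closed by the boundary condition at `u_n`, this yields the discrete energy
inequality `2(G₁(u_n) - G₁(u₁)) < α²g₂(u_n)²`, hence `G(u_n) - G(u₁) < α²/2` as `g₂` increases.
On the other hand `G` is convex, so `G(u_n) - G(u₁) ≥ G'(u₁)(u_n - u₁)`, and the hypothesis on `d`
gives `G' ≥ (1 - d)g₁/g₂²`. Together, `(1 - d)g(u₁)²/2 < α²/2`. The bounds on `u₁` and `u_n` then
follow from the monotonicity of `g` and `G`.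
-/

open Set Filter Topology

lemma strictMonoOn_Ici_of_deriv_pos {g : ℝ → ℝ} (hg : Continuous g)
    (hd : ∀ x > 0, 0 < deriv g x) : StrictMonoOn g (Ici 0) :=
  strictMonoOn_of_deriv_pos (convex_Ici 0) hg.continuousOn (by simpa using hd)

lemma convexOn_Ici_of_deriv2_nonneg {g : ℝ → ℝ} (hg : ContDiff ℝ 2 g)
    (hd : ∀ x > 0, 0 ≤ deriv (deriv g) x) : ConvexOn ℝ (Ici 0) g :=
  convexOn_of_deriv2_nonneg (convex_Ici 0) hg.continuous.continuousOn
    (hg.differentiable (by norm_num)).differentiableOn hg.differentiable_deriv_two.differentiableOn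
    (by simpa using hd)

lemma pos_of_strictMonoOn_Ici {g : ℝ → ℝ} (hg : StrictMonoOn g (Ici 0)) (hg0 : g 0 = 0) :
    ∀ x > 0, 0 < g x :=
  fun _ hx => hg0 ▸ hg self_mem_Ici hx.le hx

theorem ConvexOn.integral_le_trapezoid {f : ℝ → ℝ} {a b : ℝ} (hab : a ≤ b)
    (hf : ConvexOn ℝ (Icc a b) f) (hfc : ContinuousOn f (Icc a b)) :
    ∫ t in a..b, f t ≤ (f a + f b) / 2 * (b - a) := by
  rcases hab.eq_or_lt with rfl | hab
  · simp
  have hba : b - a ≠ 0 := sub_ne_zero.2 hab.ne'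
  have hchord : ∀ t ∈ Icc a b, f t ≤ ((b - t) * f a + (t - a) * f b) / (b - a) := by
    rintro t ⟨hat, htb⟩
    rw [le_div_iff₀ (sub_pos.2 hab)]
    rcases hat.eq_or_lt with rfl | hat
    · linarith
    rcases htb.eq_or_lt with rfl | htb
    · linarith
    linarith [hf.secant_mono_aux1 (left_mem_Icc.2 hab.le) (right_mem_Icc.2 hab.le) hat htb]
  have hprim : ∀ t ∈ uIcc a b,
      HasDerivAt (fun t => ((t - a) ^ 2 * f b - (t - b) ^ 2 * f a) / (2 * (b - a)))
        (((b - t) * f a + (t - a) * f b) / (b - a)) t := by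
    intro t _
    have hpoly := ((((hasDerivAt_id' t).sub_const a).fun_pow 2).mul_const (f b) |>.fun_sub
      ((((hasDerivAt_id' t).sub_const b).fun_pow 2).mul_const (f a))).div_const (2 * (b - a))
    refine hpoly.congr_deriv ?_
    field_simp
    ring
  calc ∫ t in a..b, f t ≤ ∫ t in a..b, ((b - t) * f a + (t - a) * f b) / (b - a) :=
        intervalIntegral.integral_mono_on hab.le
          ((hfc.mono (by rw [uIcc_of_le hab.le])).intervalIntegrable)
          ((by fun_prop : Continuous _).intervalIntegrable _ _) hchord
    _ = (f a + f b) / 2 * (b - a) := by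
        rw [intervalIntegral.integral_eq_sub_of_hasDerivAt hprim
          ((by fun_prop : Continuous _).intervalIntegrable _ _)]
        field_simp
        ring

lemma hasDerivAt_primG1 {g : ℝ → ℝ} (hg : Continuous g) (x : ℝ) :
    HasDerivAt (primG1 g) (g x) x :=
  (hg.integral_hasStrictDerivAt 0 x).hasDerivAt

lemma primG1_pos {g : ℝ → ℝ} (hg : Continuous g) (hpos : ∀ x > 0, 0 < g x) {x : ℝ}
    (hx : 0 < x) : 0 < primG1 g x :=
  intervalIntegral.intervalIntegral_pos_of_pos_on (hg.intervalIntegrable _ _)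
    (fun t ht => hpos t ht.1) hx

lemma two_mul_primG1_sub_le {g : ℝ → ℝ} (hg : Continuous g) (hconv : ConvexOn ℝ (Ici 0) g)
    {a b : ℝ} (ha : 0 ≤ a) (hab : a ≤ b) :
    2 * (primG1 g b - primG1 g a) ≤ (g a + g b) * (b - a) := by
  have h := hconv.subset (Icc_subset_Ici_iff hab |>.2 ha) (convex_Icc a b)
    |>.integral_le_trapezoid hab hg.continuousOn
  rw [primG1, primG1, intervalIntegral.integral_interval_sub_left
    (hg.intervalIntegrable _ _) (hg.intervalIntegrable _ _)]
  linarith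

section SecondDifference

variable {v : ℕ → ℝ} {N : ℕ} {c : ℝ}

lemma le_succ_sub_of_le_secondDiff (hc : ∀ k, k + 2 ≤ N → c ≤ v (k + 2) - 2 * v (k + 1) + v k) :
    ∀ m, m + 1 ≤ N → v 1 - v 0 + m * c ≤ v (m + 1) - v m := by
  intro m
  induction m with
  | zero => simp
  | succ m ih =>
    intro hm
    have := hc m (by omega)
    push_cast
    linarith [ih (by omega)]

lemma le_sub_of_le_secondDiff (hc : ∀ k, k + 2 ≤ N → c ≤ v (k + 2) - 2 * v (k + 1) + v k) :
    ∀ m, m ≤ N → m * (v 1 - v 0) + m * (m - 1) / 2 * c ≤ v m - v 0 := by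
  intro m
  induction m with
  | zero => simp
  | succ m ih =>
    intro hm
    have := le_succ_sub_of_le_secondDiff hc m hm
    push_cast
    linarith [ih (by omega)]

/-- By the recurrence, the flux `w m = v (m + 1) - v m + c / 2 * f (v (m + 1))` also equals
`v (m + 2) - v (m + 1) - c / 2 * f (v (m + 1))`; hence `w (m + 1) ^ 2 - w m ^ 2` is
`c * (f (v (m + 1)) + f (v (m + 2))) * (v (m + 2) - v (m + 1))` plus the increment of
`c ^ 2 / 4 * f (v _) ^ 2`, and the trapezoid inequality telescopes. -/
lemma energy_le_sq_flux {f F : ℝ → ℝ} (hc : 0 ≤ c) (h0 : v 1 - v 0 = c / 2 * f (v 0))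
    (hrec : ∀ k, k + 2 ≤ N → v (k + 2) - 2 * v (k + 1) + v k = c * f (v (k + 1)))
    (htrap : ∀ k, k + 1 ≤ N →
      2 * (F (v (k + 1)) - F (v k)) ≤ (f (v k) + f (v (k + 1))) * (v (k + 1) - v k)) :
    ∀ m, m + 1 ≤ N →
      c ^ 2 / 4 * (f (v (m + 1)) ^ 2 - f (v 0) ^ 2) + 2 * c * (F (v (m + 1)) - F (v 0)) ≤
        (v (m + 1) - v m + c / 2 * f (v (m + 1))) ^ 2 := by
  intro m
  induction m with
  | zero =>
    intro hN
    have := mul_le_mul_of_nonneg_left (htrap 0 hN) hc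
    rw [h0] at this ⊢
    nlinarith
  | succ m ih =>
    intro hN
    have hflux : v (m + 2) - v (m + 1) - c / 2 * f (v (m + 1))
        = v (m + 1) - v m + c / 2 * f (v (m + 1)) := by
      linarith [hrec m hN]
    have := mul_le_mul_of_nonneg_left (htrap (m + 1) hN) hc
    have := ih (by omega)
    rw [← hflux] at this
    nlinarith

end SecondDifference

section GG

variable {g1 g2 : ℝ → ℝ}

lemma hasDerivAt_GG (hg1 : Continuous g1) {x : ℝ} (hg2 : DifferentiableAt ℝ g2 x)
    (hx : g2 x ≠ 0) :
    HasDerivAt (GG g1 g2) ((g1 x * g2 x - 2 * primG1 g1 x * deriv g2 x) / g2 x ^ 3) x := by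
  have hquot := (hasDerivAt_primG1 hg1 x).div (hg2.hasDerivAt.fun_pow 2) (pow_ne_zero 2 hx)
  refine hquot.congr_deriv ?_
  field_simp
  ring

lemma convexOn_GG (hg1 : Differentiable ℝ g1) (hg2 : ContDiff ℝ 2 g2)
    (hg2_pos : ∀ x > 0, 0 < g2 x) (hGG : ∀ x > 0, 0 ≤ deriv (deriv (GG g1 g2)) x) :
    ConvexOn ℝ (Ioi 0) (GG g1 g2) := by
  have hg2' : Differentiable ℝ g2 := hg2.differentiable (by norm_num)
  have hderiv : ∀ x > 0, HasDerivAt (GG g1 g2)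
      ((g1 x * g2 x - 2 * primG1 g1 x * deriv g2 x) / g2 x ^ 3) x := fun x hx =>
    hasDerivAt_GG hg1.continuous (hg2' x) (hg2_pos x hx).ne'
  refine convexOn_of_deriv2_nonneg' (convex_Ioi 0)
    (fun x hx => (hderiv x hx).differentiableAt.differentiableWithinAt) (fun x hx => ?_)
    (by simpa using hGG)
  have hev : deriv (GG g1 g2) =ᶠ[𝓝 x]
      fun y => (g1 y * g2 y - 2 * primG1 g1 y * deriv g2 y) / g2 y ^ 3 :=
    eventually_of_mem (Ioi_mem_nhds hx) fun y hy => (hderiv y hy).deriv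
  have hP : Differentiable ℝ (primG1 g1) := fun y =>
    (hasDerivAt_primG1 hg1.continuous y).differentiableAt
  have hd2 : Differentiable ℝ (deriv g2) := hg2.differentiable_deriv_two
  refine (DifferentiableAt.congr_of_eventuallyEq ?_ hev).differentiableWithinAt
  exact ((hg1 x).mul (hg2' x) |>.sub (((hP x).const_mul 2).mul (hd2 x))).div
    ((hg2' x).pow 3) (pow_ne_zero 3 (hg2_pos x hx).ne')

lemma one_sub_mul_le_deriv_GG (hg1 : Continuous g1) {d x : ℝ} (hg2 : DifferentiableAt ℝ g2 x)
    (hg2x : 0 < g2 x) (hP : 0 < primG1 g1 x)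
    (hd : 0 ≤ d * g1 x / primG1 g1 x - 2 * deriv g2 x / g2 x) :
    (1 - d) * g1 x / g2 x ^ 2 ≤ deriv (GG g1 g2) x := by
  rw [(hasDerivAt_GG hg1 hg2 hg2x.ne').deriv, div_le_div_iff₀ (by positivity) (by positivity)]
  rw [sub_nonneg, div_le_div_iff₀ hg2x hP] at hd
  nlinarith [mul_le_mul_of_nonneg_left hd (pow_pos hg2x 4).le]

lemma GG_sub_lt {a b α : ℝ} (hab : 2 * (primG1 g1 b - primG1 g1 a) < α ^ 2 * g2 b ^ 2)
    (ha : 0 < g2 a) (hg2 : g2 a ≤ g2 b) (hP : 0 ≤ primG1 g1 a) :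
    GG g1 g2 b - GG g1 g2 a < α ^ 2 / 2 := by
  have hb : 0 < g2 b := ha.trans_le hg2
  calc GG g1 g2 b - GG g1 g2 a ≤ (primG1 g1 b - primG1 g1 a) / g2 b ^ 2 := by
        rw [GG, GG, sub_div]
        gcongr
    _ < α ^ 2 / 2 := by
        rw [div_lt_div_iff₀ (by positivity) two_pos]
        linarith

end GG

lemma one_sub_mul_gg_sq_le_GG_sub {g1 g2 : ℝ → ℝ} (hg1 : Differentiable ℝ g1)
    (hg2 : ContDiff ℝ 2 g2) (hg1_pos : ∀ x > 0, 0 < g1 x) (hg2_pos : ∀ x > 0, 0 < g2 x)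
    (hGG : ∀ x > 0, 0 ≤ deriv (deriv (GG g1 g2)) x) {a b d : ℝ} (hd : d ≤ 1)
    (hda : 0 ≤ d * g1 a / primG1 g1 a - 2 * deriv g2 a / g2 a)
    (ha : 0 < a) (hab : a < b) (hspread : g1 a / 2 ≤ b - a) :
    (1 - d) * gg g1 g2 a ^ 2 / 2 ≤ GG g1 g2 b - GG g1 g2 a := by
  have hg2' : DifferentiableAt ℝ g2 a := hg2.differentiable (by norm_num) a
  have hderiv := one_sub_mul_le_deriv_GG hg1.continuous hg2' (hg2_pos a ha)
    (primG1_pos hg1.continuous hg1_pos ha) hda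
  have hslope := (convexOn_GG hg1 hg2 hg2_pos hGG).deriv_le_slope ha (ha.trans hab) hab
    (hasDerivAt_GG hg1.continuous hg2' (hg2_pos a ha).ne').differentiableAt
  rw [slope_def_field, le_div_iff₀ (sub_pos.2 hab)] at hslope
  calc (1 - d) * gg g1 g2 a ^ 2 / 2 = (1 - d) * g1 a / g2 a ^ 2 * (g1 a / 2) := by
        rw [gg]; ring
    _ ≤ deriv (GG g1 g2) a * (b - a) :=
        mul_le_mul hderiv hspread (by linarith [hg1_pos a ha])
          (hderiv.trans' (div_nonneg (mul_nonneg (by linarith) (hg1_pos a ha).le) (sq_nonneg _)))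
    _ ≤ GG g1 g2 b - GG g1 g2 a := hslope

namespace IsSolution

variable {g1 g2 : ℝ → ℝ} {n : ℕ} {h α : ℝ} {u : ℕ → ℝ}

-- The sequence lemmas are applied to `fun k => u (k + 1)`, which carries the indices `1, …, n`
-- of a solution to `0, …, n - 1`.
lemma secondDiff (hu : IsSolution g1 g2 n h α u) :
    ∀ k, k + 2 ≤ n - 1 →
      u (k + 2 + 1) - 2 * u (k + 1 + 1) + u (k + 1) = h ^ 2 * g1 (u (k + 1 + 1)) :=
  fun k hk => hu.2.2.1 (k + 2) (by omega) hk

lemma secondDiff_nonneg (hu : IsSolution g1 g2 n h α u) (hg1 : ∀ x > 0, 0 ≤ g1 x) :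
    ∀ k, k + 2 ≤ n - 1 → 0 ≤ u (k + 2 + 1) - 2 * u (k + 1 + 1) + u (k + 1) := by
  intro k hk
  rw [hu.secondDiff k hk]
  exact mul_nonneg (sq_nonneg h) (hg1 _ (hu.1 _ (by omega) (by omega)))

lemma first_diff_nonneg (hu : IsSolution g1 g2 n h α u) (hg1 : ∀ x > 0, 0 ≤ g1 x)
    (hn : 1 ≤ n) : 0 ≤ u 2 - u 1 := by
  rw [hu.2.1]
  exact mul_nonneg (by positivity) (hg1 _ (hu.1 1 le_rfl hn))

lemma le_succ (hu : IsSolution g1 g2 n h α u) (hg1 : ∀ x > 0, 0 ≤ g1 x) :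
    ∀ m, m + 1 ≤ n - 1 → u (m + 1) ≤ u (m + 1 + 1) := by
  intro m hm
  have := le_succ_sub_of_le_secondDiff (v := fun k => u (k + 1)) (c := 0)
    (hu.secondDiff_nonneg hg1) m hm
  simp only [zero_add, mul_zero, add_zero] at this
  linarith [hu.first_diff_nonneg hg1 (by omega)]

lemma first_le (hu : IsSolution g1 g2 n h α u) (hg1 : ∀ x > 0, 0 ≤ g1 x) :
    ∀ m, m ≤ n - 1 → u 1 ≤ u (m + 1) := by
  rintro (_ | m) hm
  · rfl
  have := le_sub_of_le_secondDiff (v := fun k => u (k + 1)) (c := 0)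
    (hu.secondDiff_nonneg hg1) (m + 1) hm
  simp only [zero_add, mul_zero, add_zero] at this
  nlinarith [hu.first_diff_nonneg hg1 (by omega), (Nat.cast_nonneg (m + 1) : (0:ℝ) ≤ ↑(m + 1))]

lemma half_le_sub (hu : IsSolution g1 g2 n h α u) (hn : 2 ≤ n) (hh : h * (n - 1) = 1)
    (hg1 : ∀ x > 0, 0 ≤ g1 x) (hmono : MonotoneOn g1 (Ioi 0)) :
    g1 (u 1) / 2 ≤ u n - u 1 := by
  have hc : ∀ k, k + 2 ≤ n - 1 →
      h ^ 2 * g1 (u 1) ≤ u (k + 2 + 1) - 2 * u (k + 1 + 1) + u (k + 1) := by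
    intro k hk
    rw [hu.secondDiff k hk]
    gcongr
    exact hmono (hu.1 1 le_rfl (by omega)) (hu.1 _ (by omega) (by omega))
      (hu.first_le hg1 (k + 1) (by omega))
  have hgrowth := le_sub_of_le_secondDiff (v := fun k => u (k + 1)) hc (n - 1) le_rfl
  simp only [Nat.sub_add_cancel (by omega : 1 ≤ n), zero_add, hu.2.1] at hgrowth
  rw [Nat.cast_sub (by omega), Nat.cast_one] at hgrowth
  linear_combination hgrowth - g1 (u 1) / 2 * (h * (n - 1) + 1) * hh

lemma two_mul_primG1_sub_lt (hu : IsSolution g1 g2 n h α u) (hn : 2 ≤ n) (hh : h ≠ 0)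
    (hg1 : Continuous g1) (hconv : ConvexOn ℝ (Ici 0) g1) (hg1_nonneg : ∀ x > 0, 0 ≤ g1 x)
    (hlt : g1 (u 1) < g1 (u n)) :
    2 * (primG1 g1 (u n) - primG1 g1 (u 1)) < α ^ 2 * g2 (u n) ^ 2 := by
  obtain ⟨N, rfl⟩ : ∃ N, n = N + 1 + 1 := ⟨n - 2, by omega⟩
  have htrap : ∀ k, k + 1 ≤ N + 1 → 2 * (primG1 g1 (u (k + 1 + 1)) - primG1 g1 (u (k + 1))) ≤
      (g1 (u (k + 1)) + g1 (u (k + 1 + 1))) * (u (k + 1 + 1) - u (k + 1)) := fun k hk =>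
    two_mul_primG1_sub_le hg1 hconv (hu.1 _ (by omega) (by omega)).le (hu.le_succ hg1_nonneg k hk)
  have henergy := energy_le_sq_flux (v := fun k => u (k + 1)) (sq_nonneg h) hu.2.1
    hu.secondDiff htrap N le_rfl
  have hflux : u (N + 1 + 1) - u (N + 1) + h ^ 2 / 2 * g1 (u (N + 1 + 1)) =
      h * α * g2 (u (N + 1 + 1)) := by
    have := hu.2.2.2
    simp only [Nat.add_sub_cancel] at this
    linarith
  simp only [hflux, zero_add] at henergy
  have hg1_sq : 0 < h ^ 4 / 4 * (g1 (u (N + 1 + 1)) ^ 2 - g1 (u 1) ^ 2) := by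
    have := pow_lt_pow_left₀ hlt (hg1_nonneg _ (hu.1 1 le_rfl (by omega))) two_ne_zero
    exact mul_pos (by positivity) (sub_pos.2 this)
  have hgap : 0 < h ^ 2 *
      (α ^ 2 * g2 (u (N + 1 + 1)) ^ 2 - 2 * (primG1 g1 (u (N + 1 + 1)) - primG1 g1 (u 1))) := by
    linarith
  linarith [pos_of_mul_pos_right hgap (sq_nonneg h)]

theorem gg_sq_lt_and_GG_lt (hu : IsSolution g1 g2 n h α u) (hn : 2 ≤ n) (hh : h * (n - 1) = 1)
    (hg1 : ContDiff ℝ 2 g1) (hg2 : ContDiff ℝ 2 g2) (hg10 : g1 0 = 0) (hg20 : g2 0 = 0)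
    (hg1_mono : StrictMonoOn g1 (Ici 0)) (hg2_mono : StrictMonoOn g2 (Ici 0))
    (hg1_conv : ConvexOn ℝ (Ici 0) g1) {d : ℝ} (hd : d < 1)
    (hdg : ∀ x > 0, 0 ≤ d * g1 x / primG1 g1 x - 2 * deriv g2 x / g2 x)
    (hGG : ∀ x > 0, 0 ≤ deriv (deriv (GG g1 g2)) x) :
    gg g1 g2 (u 1) ^ 2 < α ^ 2 / (1 - d) ∧ GG g1 g2 (u n) < GG g1 g2 (u 1) + α ^ 2 / 2 := by
  have hg1' : Differentiable ℝ g1 := hg1.differentiable (by norm_num)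
  have hg1_pos := pos_of_strictMonoOn_Ici hg1_mono hg10
  have hg2_pos := pos_of_strictMonoOn_Ici hg2_mono hg20
  have hu1 : 0 < u 1 := hu.1 1 le_rfl (by omega)
  have hun : 0 < u n := hu.1 n (by omega) le_rfl
  have hspread : g1 (u 1) / 2 ≤ u n - u 1 :=
    hu.half_le_sub hn hh (fun x hx => (hg1_pos x hx).le)
      (hg1_mono.monotoneOn.mono Ioi_subset_Ici_self)
  have hu1n : u 1 < u n := by linarith [hg1_pos _ hu1]
  have hGG_lt : GG g1 g2 (u n) - GG g1 g2 (u 1) < α ^ 2 / 2 :=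
    GG_sub_lt (hu.two_mul_primG1_sub_lt hn (left_ne_zero_of_mul_eq_one hh) hg1'.continuous
        hg1_conv (fun x hx => (hg1_pos x hx).le) (hg1_mono hu1.le hun.le hu1n))
      (hg2_pos _ hu1) (hg2_mono.monotoneOn hu1.le hun.le hu1n.le)
      (primG1_pos hg1'.continuous hg1_pos hu1).le
  have hGG_ge := one_sub_mul_gg_sq_le_GG_sub hg1' hg2 hg1_pos hg2_pos hGG hd.le (hdg _ hu1)
    hu1 hu1n hspread
  refine ⟨?_, by linarith⟩
  rw [lt_div_iff₀ (by linarith)]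
  linarith

end IsSolution

theorem stmt_10_general (n : ℕ) (hn : 2 ≤ n) (h : ℝ) (hh : h = 1 / ((n : ℝ) - 1))
    (g1 g2 : ℝ → ℝ)
    (hg1C : ContDiff ℝ 3 g1) (hg2C : ContDiff ℝ 3 g2)
    (hg10 : g1 0 = 0) (hg20 : g2 0 = 0)
    (hg1d : ∀ x > (0:ℝ), 0 < deriv g1 x) (hg2d : ∀ x > (0:ℝ), 0 < deriv g2 x)
    (hg1dd : ∀ x > (0:ℝ), 0 < deriv (deriv g1) x)
    (α : ℝ) (hα : 0 < α) (u : ℕ → ℝ) (hu : IsSolution g1 g2 n h α u)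
    (d : ℝ) (hd1 : d < 1)
    (hH2 : ∀ x > (0:ℝ), 0 ≤ d * g1 x / primG1 g1 x - 2 * deriv g2 x / g2 x)
    (hH3 : ∀ x > (0:ℝ), 0 ≤ deriv (deriv (GG g1 g2)) x) :
    (gg g1 g2 (u 1)) ^ 2 < α ^ 2 / (1 - d) ∧
    (∀ ginv Ginv : ℝ → ℝ,
      StrictMonoOn (gg g1 g2) (Set.Ioi 0) →
      Set.BijOn (gg g1 g2) (Set.Ioi 0) (Set.Ioi 0) →
      StrictMonoOn (GG g1 g2) (Set.Ioi 0) →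
      Set.BijOn (GG g1 g2) (Set.Ioi 0) (Set.Ioi 0) →
      (∀ y ∈ Set.Ioi (0:ℝ), ginv y ∈ Set.Ioi 0 ∧ gg g1 g2 (ginv y) = y) →
      (∀ y ∈ Set.Ioi (0:ℝ), Ginv y ∈ Set.Ioi 0 ∧ GG g1 g2 (Ginv y) = y) →
      u 1 < ginv (α / Real.sqrt (1 - d)) ∧
      u n < Ginv (GG g1 g2 (ginv (α / Real.sqrt (1 - d))) + α ^ 2 / 2)) := by
  have hg1 : ContDiff ℝ 2 g1 := hg1C.of_le (by norm_num)
  have hg2 : ContDiff ℝ 2 g2 := hg2C.of_le (by norm_num)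
  have hhn : h * (n - 1) = 1 := by
    have : (2:ℝ) ≤ n := by exact_mod_cast hn
    rw [hh, one_div_mul_cancel (by linarith)]
  obtain ⟨hgg, hGG⟩ := hu.gg_sq_lt_and_GG_lt hn hhn hg1 hg2 hg10 hg20
    (strictMonoOn_Ici_of_deriv_pos hg1.continuous hg1d)
    (strictMonoOn_Ici_of_deriv_pos hg2.continuous hg2d)
    (convexOn_Ici_of_deriv2_nonneg hg1 fun x hx => (hg1dd x hx).le) hd1 hH2 hH3
  refine ⟨hgg, fun ginv Ginv hg_mono _ hG_mono hG_bij hginv hGinv => ?_⟩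
  have hu1 : 0 < u 1 := hu.1 1 le_rfl (by omega)
  have hy : 0 < α / √(1 - d) := div_pos hα (Real.sqrt_pos.2 (by linarith))
  obtain ⟨hgy_pos, hgy⟩ := hginv _ hy
  have hu1_lt : u 1 < ginv (α / √(1 - d)) := by
    refine (hg_mono.lt_iff_lt hu1 hgy_pos).1 (hgy.symm ▸ lt_of_pow_lt_pow_left₀ 2 hy.le ?_)
    rwa [div_pow, Real.sq_sqrt (by linarith)]
  obtain ⟨hGy_pos, hGy⟩ :=
    hGinv _ (add_pos (hG_bij.mapsTo hgy_pos) (by positivity : (0:ℝ) < α ^ 2 / 2))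
  refine ⟨hu1_lt, (hG_mono.lt_iff_lt (hu.1 n (by omega) le_rfl) hGy_pos).1 ?_⟩
  linarith [hG_mono hu1 hgy_pos hu1_lt]

theorem stmt_10 (n : ℕ) (hn : 2 ≤ n) (h : ℝ) (hh : h = 1 / ((n : ℝ) - 1))
    (g1 g2 : ℝ → ℝ)
    (hg1C : ContDiff ℝ 3 g1) (hg2C : ContDiff ℝ 3 g2)
    (hg10 : g1 0 = 0) (hg20 : g2 0 = 0)
    (hg1d : ∀ x > (0:ℝ), 0 < deriv g1 x) (hg2d : ∀ x > (0:ℝ), 0 < deriv g2 x)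
    (hg1dd : ∀ x > (0:ℝ), 0 < deriv (deriv g1) x)
    (hg2dd : ∀ x > (0:ℝ), 0 < deriv (deriv g2) x)
    (hg1ddd : ∀ x > (0:ℝ), 0 ≤ deriv (deriv (deriv g1)) x)
    (hg2ddd : ∀ x > (0:ℝ), 0 ≤ deriv (deriv (deriv g2)) x)
    (α : ℝ) (hα : 0 < α) (u : ℕ → ℝ) (hu : IsSolution g1 g2 n h α u)
    (d : ℝ) (hd0 : 0 ≤ d) (hd1 : d < 1)
    (hH2 : ∀ x > (0:ℝ), 0 ≤ d * g1 x / primG1 g1 x - 2 * deriv g2 x / g2 x)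
    (hH3 : ∀ x > (0:ℝ), 0 ≤ deriv (deriv (GG g1 g2)) x) :
    (gg g1 g2 (u 1)) ^ 2 < α ^ 2 / (1 - d) ∧
    (∀ ginv Ginv : ℝ → ℝ,
      StrictMonoOn (gg g1 g2) (Set.Ioi 0) →
      Set.BijOn (gg g1 g2) (Set.Ioi 0) (Set.Ioi 0) →
      StrictMonoOn (GG g1 g2) (Set.Ioi 0) →
      Set.BijOn (GG g1 g2) (Set.Ioi 0) (Set.Ioi 0) →
      (∀ y ∈ Set.Ioi (0:ℝ), ginv y ∈ Set.Ioi 0 ∧ gg g1 g2 (ginv y) = y) →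
      (∀ y ∈ Set.Ioi (0:ℝ), Ginv y ∈ Set.Ioi 0 ∧ GG g1 g2 (Ginv y) = y) →
      u 1 < ginv (α / Real.sqrt (1 - d)) ∧
      u n < Ginv (GG g1 g2 (ginv (α / Real.sqrt (1 - d))) + α ^ 2 / 2)) :=
  stmt_10_general n hn h hh g1 g2 hg1C hg2C hg10 hg20 hg1d hg2d hg1dd α hα u hu d hd1 hH2 hH3
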